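/- arXiv:2205.06925 — 5 statements merged into one kernel-verified Lean document; each statement's English description precedes it below -/
import Mathlib

section
/- The SCAD proximal operator has the following closed form. Let σ > 0, α > 0 and ρ > 1 + α, and let r be the SCAD penalty with parameters σ and ρ. For every z ∈ ℝ, a global minimizer over ℝ of x ↦ r(x) + (1/(2α))(x − z)² is given by: sign(z)·max(|z| − σα, 0) if |z| ≤ σ(1 + α); ((ρ − 1)z − sign(z)·ρσα)/(ρ − 1 − α) if σ(1 + α) < |z| ≤ ρσ; and z itself if |z| > ρσ. -/
/-- The SCAD penalty with parameters `σ > 0` and `ρ > 1`: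
`r(x) = σ|x|` for `|x| ≤ σ`, `r(x) = (−x² + 2ρσ|x| − σ²)/(2(ρ − 1))` for `σ < |x| ≤ ρσ`,
and `r(x) = σ²(ρ + 1)/2` for `|x| > ρσ`. -/
noncomputable def scad (σ ρ x : ℝ) : ℝ :=
  if |x| ≤ σ then σ * |x|
  else if |x| ≤ ρ * σ then (-x ^ 2 + 2 * ρ * σ * |x| - σ ^ 2) / (2 * (ρ - 1))
  else σ ^ 2 * (ρ + 1) / 2

/-- The closed form of the SCAD proximal operator (for `ρ > 1 + α`):
`sign(z)·(|z| − σα)₊` if `|z| ≤ σ(1+α)`;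
`((ρ−1)z − sign(z)ρσα)/(ρ−1−α)` if `σ(1+α) < |z| ≤ ρσ`; and `z` if `|z| > ρσ`. -/
noncomputable def scadProx (σ ρ α z : ℝ) : ℝ :=
  if |z| ≤ σ * (1 + α) then Real.sign z * max (|z| - σ * α) 0
  else if |z| ≤ ρ * σ then ((ρ - 1) * z - Real.sign z * ρ * σ * α) / (ρ - 1 - α)
  else z

lemma scad_neg' (σ ρ x : ℝ) : scad σ ρ (-x) = scad σ ρ x := by
  simp [scad, abs_neg, neg_sq]

lemma scadProx_neg' (σ ρ α z : ℝ) : scadProx σ ρ α (-z) = - scadProx σ ρ α z := by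
  simp only [scadProx, abs_neg, Real.sign_neg]
  split_ifs <;> ring

set_option maxHeartbeats 16000000 in
lemma scad_key (σ ρ α : ℝ) (hσ : 0 < σ) (hα : 0 < α) (hρ : 1 + α < ρ) (z : ℝ) (hz : 0 ≤ z)
    (x : ℝ) (hx : 0 ≤ x) :
    scad σ ρ (scadProx σ ρ α z) + (1 / (2 * α)) * (scadProx σ ρ α z - z) ^ 2 ≤
      scad σ ρ x + (1 / (2 * α)) * (x - z) ^ 2 := by
  have hρ1 : (1:ℝ) < ρ := by linarith
  have hd : (0:ℝ) < ρ - 1 - α := by linarith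
  have hr1 : (0:ℝ) < ρ - 1 := by linarith
  have hαne : α ≠ 0 := ne_of_gt hα
  have hr1ne : ρ - 1 ≠ 0 := ne_of_gt hr1
  have hdne : ρ - 1 - α ≠ 0 := ne_of_gt hd
  have hDA : (0:ℝ) < 4 * α * (ρ - 1) := by nlinarith [mul_pos hα hr1]
  have hDB : (0:ℝ) < 4 * α * (ρ - 1) * (ρ - 1 - α) ^ 2 := by
    nlinarith [mul_pos (mul_pos hα hr1) (mul_pos hd hd)]
  have hzz : |z| = z := abs_of_nonneg hz
  have hxx : |x| = x := abs_of_nonneg hx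
  rw [scadProx, hzz]
  by_cases hA : z ≤ σ * (1 + α)
  · rw [if_pos hA]
    by_cases hA1 : z ≤ σ * α
    · -- p = 0
      have hu1 : (0:ℝ) ≤ σ * α - z := by linarith
      have hmax : max (z - σ * α) 0 = 0 := max_eq_right (by linarith)
      rw [hmax, mul_zero]
      have h0 : scad σ ρ 0 = 0 := by simp [scad, hσ.le]
      rw [h0, scad, hxx]
      split_ifs with h1 h2
      ·
        have hN : (0:ℝ) ≤ (-2 : ℝ) * x ^ 2 + 4 * z * x + 2 * ρ * x ^ 2 + (-4 : ℝ) * ρ * z * x + (-4 : ℝ) * σ * α * x + 4 * σ * ρ * α * x := by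
          nlinarith [
            mul_nonneg hr1.le (sq_nonneg x),
            mul_nonneg (mul_nonneg hr1.le hx) hu1]
        have e : (σ * x + 1 / (2 * α) * (x - z) ^ 2) - (0 + 1 / (2 * α) * (0 - z) ^ 2) = ((-2 : ℝ) * x ^ 2 + 4 * z * x + 2 * ρ * x ^ 2 + (-4 : ℝ) * ρ * z * x + (-4 : ℝ) * σ * α * x + 4 * σ * ρ * α * x) / (4 * α * (ρ - 1)) := by
          field_simp
          ring
        linarith [e, div_nonneg hN hDA.le]
      · push_neg at h1
        have hN : (0:ℝ) ≤ (-2 : ℝ) * x ^ 2 + 4 * z * x + (-2 : ℝ) * α * x ^ 2 + 2 * ρ * x ^ 2 + (-4 : ℝ) * ρ * z * x + 4 * σ * ρ * α * x + (-2 : ℝ) * σ ^ 2 * α := by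
          nlinarith [
            mul_nonneg hd.le (sq_nonneg x),
            mul_nonneg (mul_nonneg hr1.le hx) hu1,
            mul_nonneg (mul_nonneg hα.le hσ.le) (show (0:ℝ) ≤ x - σ by linarith),
            mul_nonneg hα.le (mul_nonneg hσ.le hσ.le)]
        have e : ((-x ^ 2 + 2 * ρ * σ * x - σ ^ 2) / (2 * (ρ - 1)) + 1 / (2 * α) * (x - z) ^ 2) - (0 + 1 / (2 * α) * (0 - z) ^ 2) = ((-2 : ℝ) * x ^ 2 + 4 * z * x + (-2 : ℝ) * α * x ^ 2 + 2 * ρ * x ^ 2 + (-4 : ℝ) * ρ * z * x + 4 * σ * ρ * α * x + (-2 : ℝ) * σ ^ 2 * α) / (4 * α * (ρ - 1)) := by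
          field_simp
          ring
        linarith [e, div_nonneg hN hDA.le]
      · push_neg at h1 h2
        have hN : (0:ℝ) ≤ (-2 : ℝ) * x ^ 2 + 4 * z * x + 2 * ρ * x ^ 2 + (-4 : ℝ) * ρ * z * x + (-2 : ℝ) * σ ^ 2 * α + 2 * σ ^ 2 * ρ ^ 2 * α := by
          nlinarith [
            mul_nonneg hr1.le (sq_nonneg (x - σ * α)),
            mul_nonneg (mul_nonneg (mul_nonneg hr1.le (mul_nonneg hσ.le hσ.le)) hα.le) (show (0:ℝ) ≤ ρ + 1 - α by linarith),
            mul_nonneg (mul_nonneg hr1.le hx) hu1]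
        have e : (σ ^ 2 * (ρ + 1) / 2 + 1 / (2 * α) * (x - z) ^ 2) - (0 + 1 / (2 * α) * (0 - z) ^ 2) = ((-2 : ℝ) * x ^ 2 + 4 * z * x + 2 * ρ * x ^ 2 + (-4 : ℝ) * ρ * z * x + (-2 : ℝ) * σ ^ 2 * α + 2 * σ ^ 2 * ρ ^ 2 * α) / (4 * α * (ρ - 1)) := by
          field_simp
          ring
        linarith [e, div_nonneg hN hDA.le]
    · -- p = z - σα
      push_neg at hA1
      have hzpos : 0 < z := lt_of_le_of_lt (by positivity) hA1
      rw [Real.sign_of_pos hzpos]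
      have hmax : max (z - σ * α) 0 = z - σ * α := max_eq_left (by linarith)
      rw [hmax, one_mul]
      have hp1 : z - σ * α ≤ σ := by nlinarith
      have hscadp : scad σ ρ (z - σ * α) = σ * (z - σ * α) := by
        rw [scad, abs_of_nonneg (by linarith : (0:ℝ) ≤ z - σ * α), if_pos hp1]
      rw [hscadp, scad, hxx]
      have hsig : (0:ℝ) ≤ (ρ - 1 - α) * σ - (ρ - 1) * z + ρ * σ * α := by
        nlinarith [mul_nonneg hr1.le (show (0:ℝ) ≤ σ * (1 + α) - z by linarith)]
      split_ifs with h1 h2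
      ·
        have hN : (0:ℝ) ≤ (-2 : ℝ) * x ^ 2 + 4 * z * x + (-2 : ℝ) * z ^ 2 + 2 * ρ * x ^ 2 + (-4 : ℝ) * ρ * z * x + 2 * ρ * z ^ 2 + (-4 : ℝ) * σ * α * x + 4 * σ * α * z + 4 * σ * ρ * α * x + (-4 : ℝ) * σ * ρ * α * z + (-2 : ℝ) * σ ^ 2 * α ^ 2 + 2 * σ ^ 2 * ρ * α ^ 2 := by
          nlinarith [
            mul_nonneg hr1.le (sq_nonneg (x - z + σ * α))]
        have e : (σ * x + 1 / (2 * α) * (x - z) ^ 2) - (σ * (z - σ * α) + 1 / (2 * α) * (z - σ * α - z) ^ 2) = ((-2 : ℝ) * x ^ 2 + 4 * z * x + (-2 : ℝ) * z ^ 2 + 2 * ρ * x ^ 2 + (-4 : ℝ) * ρ * z * x + 2 * ρ * z ^ 2 + (-4 : ℝ) * σ * α * x + 4 * σ * α * z + 4 * σ * ρ * α * x + (-4 : ℝ) * σ * ρ * α * z + (-2 : ℝ) * σ ^ 2 * α ^ 2 + 2 * σ ^ 2 * ρ * α ^ 2) / (4 * α * (ρ - 1)) := by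
          field_simp
          ring
        linarith [e, div_nonneg hN hDA.le]
      · push_neg at h1
        have hf1 : (0:ℝ) ≤ (ρ - 1 - α) * x - (ρ - 1) * z + ρ * σ * α := by
          nlinarith [mul_nonneg hd.le (show (0:ℝ) ≤ x - σ by linarith)]
        have hN : (0:ℝ) ≤ (-2 : ℝ) * x ^ 2 + 4 * z * x + (-2 : ℝ) * z ^ 2 + (-2 : ℝ) * α * x ^ 2 + 2 * ρ * x ^ 2 + (-4 : ℝ) * ρ * z * x + 2 * ρ * z ^ 2 + 4 * σ * α * z + 4 * σ * ρ * α * x + (-4 : ℝ) * σ * ρ * α * z + (-2 : ℝ) * σ ^ 2 * α + (-2 : ℝ) * σ ^ 2 * α ^ 2 + 2 * σ ^ 2 * ρ * α ^ 2 := by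
          nlinarith [
            mul_nonneg (show (0:ℝ) ≤ x - σ by linarith) hf1,
            mul_nonneg (show (0:ℝ) ≤ x - σ by linarith) hsig,
            mul_nonneg hr1.le (sq_nonneg (σ + σ * α - z))]
        have e : ((-x ^ 2 + 2 * ρ * σ * x - σ ^ 2) / (2 * (ρ - 1)) + 1 / (2 * α) * (x - z) ^ 2) - (σ * (z - σ * α) + 1 / (2 * α) * (z - σ * α - z) ^ 2) = ((-2 : ℝ) * x ^ 2 + 4 * z * x + (-2 : ℝ) * z ^ 2 + (-2 : ℝ) * α * x ^ 2 + 2 * ρ * x ^ 2 + (-4 : ℝ) * ρ * z * x + 2 * ρ * z ^ 2 + 4 * σ * α * z + 4 * σ * ρ * α * x + (-4 : ℝ) * σ * ρ * α * z + (-2 : ℝ) * σ ^ 2 * α + (-2 : ℝ) * σ ^ 2 * α ^ 2 + 2 * σ ^ 2 * ρ * α ^ 2) / (4 * α * (ρ - 1)) := by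
          field_simp
          ring
        linarith [e, div_nonneg hN hDA.le]
      · push_neg at h1 h2
        have hzρ : z < ρ * σ := by nlinarith
        have hx2z : (0:ℝ) ≤ x + ρ * σ - 2 * z := by nlinarith
        have hrss : (0:ℝ) ≤ ρ * σ - σ := by nlinarith
        have hf1rs : (0:ℝ) ≤ (ρ - 1 - α) * (ρ * σ) - (ρ - 1) * z + ρ * σ * α := by
          nlinarith [mul_nonneg hd.le hrss]
        have hN : (0:ℝ) ≤ (-2 : ℝ) * x ^ 2 + 4 * z * x + (-2 : ℝ) * z ^ 2 + 2 * ρ * x ^ 2 + (-4 : ℝ) * ρ * z * x + 2 * ρ * z ^ 2 + 4 * σ * α * z + (-4 : ℝ) * σ * ρ * α * z + (-2 : ℝ) * σ ^ 2 * α + (-2 : ℝ) * σ ^ 2 * α ^ 2 + 2 * σ ^ 2 * ρ * α ^ 2 + 2 * σ ^ 2 * ρ ^ 2 * α := by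
          nlinarith [
            mul_nonneg (mul_nonneg hr1.le (show (0:ℝ) ≤ x - ρ * σ by linarith)) hx2z,
            mul_nonneg hrss hf1rs,
            mul_nonneg hrss hsig,
            mul_nonneg hr1.le (sq_nonneg (σ + σ * α - z))]
        have e : (σ ^ 2 * (ρ + 1) / 2 + 1 / (2 * α) * (x - z) ^ 2) - (σ * (z - σ * α) + 1 / (2 * α) * (z - σ * α - z) ^ 2) = ((-2 : ℝ) * x ^ 2 + 4 * z * x + (-2 : ℝ) * z ^ 2 + 2 * ρ * x ^ 2 + (-4 : ℝ) * ρ * z * x + 2 * ρ * z ^ 2 + 4 * σ * α * z + (-4 : ℝ) * σ * ρ * α * z + (-2 : ℝ) * σ ^ 2 * α + (-2 : ℝ) * σ ^ 2 * α ^ 2 + 2 * σ ^ 2 * ρ * α ^ 2 + 2 * σ ^ 2 * ρ ^ 2 * α) / (4 * α * (ρ - 1)) := by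
          field_simp
          ring
        linarith [e, div_nonneg hN hDA.le]
  · push_neg at hA
    have hzpos : 0 < z := lt_trans (by positivity) hA
    rw [if_neg (not_le.mpr hA), Real.sign_of_pos hzpos]
    by_cases hB : z ≤ ρ * σ
    · -- middle case
      rw [if_pos hB, one_mul]
      set p : ℝ := ((ρ - 1) * z - ρ * σ * α) / (ρ - 1 - α) with hpdef
      have hp1 : σ < p := by
        rw [hpdef, lt_div_iff₀ hd]; nlinarith
      have hp2 : p ≤ ρ * σ := by
        rw [hpdef, div_le_iff₀ hd]; nlinarith
      have hscadp : scad σ ρ p = (-p ^ 2 + 2 * ρ * σ * p - σ ^ 2) / (2 * (ρ - 1)) := by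
        rw [scad, abs_of_nonneg (by linarith : (0:ℝ) ≤ p), if_neg (not_le.mpr hp1), if_pos hp2]
      rw [hscadp, scad, hxx, hpdef]
      split_ifs with h1 h2
      ·
        have hN : (0:ℝ) ≤ (-2 : ℝ) * x ^ 2 + 4 * z * x + (-2 : ℝ) * z ^ 2 + (-4 : ℝ) * α * x ^ 2 + 8 * α * z * x + (-2 : ℝ) * α * z ^ 2 + (-2 : ℝ) * α ^ 2 * x ^ 2 + 4 * α ^ 2 * z * x + 6 * ρ * x ^ 2 + (-12 : ℝ) * ρ * z * x + 6 * ρ * z ^ 2 + 8 * ρ * α * x ^ 2 + (-16 : ℝ) * ρ * α * z * x + 4 * ρ * α * z ^ 2 + 2 * ρ * α ^ 2 * x ^ 2 + (-4 : ℝ) * ρ * α ^ 2 * z * x + (-6 : ℝ) * ρ ^ 2 * x ^ 2 + 12 * ρ ^ 2 * z * x + (-6 : ℝ) * ρ ^ 2 * z ^ 2 + (-4 : ℝ) * ρ ^ 2 * α * x ^ 2 + 8 * ρ ^ 2 * α * z * x + (-2 : ℝ) * ρ ^ 2 * α * z ^ 2 + 2 * ρ ^ 3 * x ^ 2 + (-4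 : ℝ) * ρ ^ 3 * z * x + 2 * ρ ^ 3 * z ^ 2 + (-4 : ℝ) * σ * α * x + (-8 : ℝ) * σ * α ^ 2 * x + (-4 : ℝ) * σ * α ^ 3 * x + 12 * σ * ρ * α * x + (-4 : ℝ) * σ * ρ * α * z + 16 * σ * ρ * α ^ 2 * x + (-4 : ℝ) * σ * ρ * α ^ 2 * z + 4 * σ * ρ * α ^ 3 * x + (-12 : ℝ) * σ * ρ ^ 2 * α * x + 8 * σ * ρ ^ 2 * α * z + (-8 : ℝ) * σ * ρ ^ 2 * α ^ 2 * x + 4 * σ * ρ ^ 2 * α ^ 2 * z + 4 * σ * ρ ^ 3 * α * x + (-4 : ℝ) * σ * ρ ^ 3 * α * z + 2 * σ ^ 2 * α + 4 * σ ^ 2 * α ^ 2 + 2 * σ ^ 2 * α ^ 3 + (-4 : ℝ) * σ ^ 2 * ρ * α + (-4 : ℝ) * σ ^ 2 * ρ * α ^ 2 + 2 * σ ^ 2 * ρ ^ 2 * α + (-2 : ℝ) * σ ^ 2 * ρ ^ 2 * α ^ 2 + (-2 : ℝ) * σ ^ 2 * ρ ^ 2 * α ^ 3 + 2 * σ ^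 2 * ρ ^ 3 * α ^ 2 := by
          nlinarith [
            mul_nonneg (mul_nonneg (mul_nonneg hr1.le (mul_pos hd hd).le) (show (0:ℝ) ≤ σ - x by linarith)) (show (0:ℝ) ≤ 2 * z - x - σ - 2 * α * σ by nlinarith),
            mul_nonneg hd.le (sq_nonneg ((ρ - 1 - α) * σ - ((ρ - 1) * z - ρ * σ * α)))]
        have e : (σ * x + 1 / (2 * α) * (x - z) ^ 2) - ((-(((ρ - 1) * z - ρ * σ * α) / (ρ - 1 - α)) ^ 2 + 2 * ρ * σ * (((ρ - 1) * z - ρ * σ * α) / (ρ - 1 - α)) - σ ^ 2) / (2 * (ρ - 1)) + 1 / (2 * α) * (((ρ - 1) * z - ρ * σ * α) / (ρ - 1 - α) - z) ^ 2) = ((-2 : ℝ) * x ^ 2 + 4 * z * x + (-2 : ℝ) * z ^ 2 + (-4 : ℝ) * α * x ^ 2 + 8 * α * z * x + (-2 : ℝ) * α * z ^ 2 + (-2 : ℝ) * α ^ 2 * x ^ 2 + 4 * α ^ 2 * z * x + 6 * ρ * x ^ 2 + (-12 : ℝ) * ρ * z * x + 6 * ρ * z ^ 2 + 8 * ρ *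 α * x ^ 2 + (-16 : ℝ) * ρ * α * z * x + 4 * ρ * α * z ^ 2 + 2 * ρ * α ^ 2 * x ^ 2 + (-4 : ℝ) * ρ * α ^ 2 * z * x + (-6 : ℝ) * ρ ^ 2 * x ^ 2 + 12 * ρ ^ 2 * z * x + (-6 : ℝ) * ρ ^ 2 * z ^ 2 + (-4 : ℝ) * ρ ^ 2 * α * x ^ 2 + 8 * ρ ^ 2 * α * z * x + (-2 : ℝ) * ρ ^ 2 * α * z ^ 2 + 2 * ρ ^ 3 * x ^ 2 + (-4 : ℝ) * ρ ^ 3 * z * x + 2 * ρ ^ 3 * z ^ 2 + (-4 : ℝ) * σ * α * x + (-8 : ℝ) * σ * α ^ 2 * x + (-4 : ℝ) * σ * α ^ 3 * x + 12 * σ * ρ * α * x + (-4 : ℝ) * σ * ρ * α * z + 16 * σ * ρ * α ^ 2 * x + (-4 : ℝ) * σ * ρ * α ^ 2 * z + 4 * σ * ρ * α ^ 3 * x + (-12 : ℝ) * σ * ρ ^ 2 * α * x + 8 * σ * ρ ^ 2 * α * z + (-8 : ℝ) * σ * ρ ^ 2 * α ^ 2 * x + 4 * σ * ρ ^ 2 *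 α ^ 2 * z + 4 * σ * ρ ^ 3 * α * x + (-4 : ℝ) * σ * ρ ^ 3 * α * z + 2 * σ ^ 2 * α + 4 * σ ^ 2 * α ^ 2 + 2 * σ ^ 2 * α ^ 3 + (-4 : ℝ) * σ ^ 2 * ρ * α + (-4 : ℝ) * σ ^ 2 * ρ * α ^ 2 + 2 * σ ^ 2 * ρ ^ 2 * α + (-2 : ℝ) * σ ^ 2 * ρ ^ 2 * α ^ 2 + (-2 : ℝ) * σ ^ 2 * ρ ^ 2 * α ^ 3 + 2 * σ ^ 2 * ρ ^ 3 * α ^ 2) / (4 * α * (ρ - 1) * (ρ - 1 - α) ^ 2) := by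
          field_simp
          ring
        linarith [e, div_nonneg hN hDB.le]
      · push_neg at h1
        have hN : (0:ℝ) ≤ (-2 : ℝ) * x ^ 2 + 4 * z * x + (-2 : ℝ) * z ^ 2 + (-6 : ℝ) * α * x ^ 2 + 8 * α * z * x + (-2 : ℝ) * α * z ^ 2 + (-6 : ℝ) * α ^ 2 * x ^ 2 + 4 * α ^ 2 * z * x + (-2 : ℝ) * α ^ 3 * x ^ 2 + 6 * ρ * x ^ 2 + (-12 : ℝ) * ρ * z * x + 6 * ρ * z ^ 2 + 12 * ρ * α * x ^ 2 + (-16 : ℝ) * ρ * α * z * x + 4 * ρ * α * z ^ 2 + 6 * ρ * α ^ 2 * x ^ 2 + (-4 : ℝ) * ρ * α ^ 2 * z * x + (-6 : ℝ) * ρ ^ 2 * x ^ 2 + 12 * ρ ^ 2 * z * x + (-6 : ℝ) * ρ ^ 2 * z ^ 2 + (-6 : ℝ) * ρ ^ 2 * α * x ^ 2 + 8 * ρ ^ 2 * α * z * x + (-2 : ℝ) * ρ ^ 2 * α * z ^ 2 + 2 * ρ ^ 3 * x ^ 2 + (-4 : ℝ) * ρ ^ 3 * z * x + 2 * ρ ^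 3 * z ^ 2 + 4 * σ * ρ * α * x + (-4 : ℝ) * σ * ρ * α * z + 8 * σ * ρ * α ^ 2 * x + (-4 : ℝ) * σ * ρ * α ^ 2 * z + 4 * σ * ρ * α ^ 3 * x + (-8 : ℝ) * σ * ρ ^ 2 * α * x + 8 * σ * ρ ^ 2 * α * z + (-8 : ℝ) * σ * ρ ^ 2 * α ^ 2 * x + 4 * σ * ρ ^ 2 * α ^ 2 * z + 4 * σ * ρ ^ 3 * α * x + (-4 : ℝ) * σ * ρ ^ 3 * α * z + (-2 : ℝ) * σ ^ 2 * ρ ^ 2 * α ^ 2 + (-2 : ℝ) * σ ^ 2 * ρ ^ 2 * α ^ 3 + 2 * σ ^ 2 * ρ ^ 3 * α ^ 2 := by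
          nlinarith [
            mul_nonneg hd.le (sq_nonneg ((ρ - 1 - α) * x - ((ρ - 1) * z - ρ * σ * α)))]
        have e : ((-x ^ 2 + 2 * ρ * σ * x - σ ^ 2) / (2 * (ρ - 1)) + 1 / (2 * α) * (x - z) ^ 2) - ((-(((ρ - 1) * z - ρ * σ * α) / (ρ - 1 - α)) ^ 2 + 2 * ρ * σ * (((ρ - 1) * z - ρ * σ * α) / (ρ - 1 - α)) - σ ^ 2) / (2 * (ρ - 1)) + 1 / (2 * α) * (((ρ - 1) * z - ρ * σ * α) / (ρ - 1 - α) - z) ^ 2) = ((-2 : ℝ) * x ^ 2 + 4 * z * x + (-2 : ℝ) * z ^ 2 + (-6 : ℝ) * α * x ^ 2 + 8 * α * z * x + (-2 : ℝ) * α * z ^ 2 + (-6 : ℝ) * α ^ 2 * x ^ 2 + 4 * α ^ 2 * z * x + (-2 : ℝ) * α ^ 3 * x ^ 2 + 6 * ρ * x ^ 2 + (-12 : ℝ) * ρ * z * x + 6 * ρ * z ^ 2 + 12 * ρ * α * x ^ 2 + (-16 : ℝ) * ρ * α * z * x + 4 * ρ * α * z ^ 2 + 6 * ρ * α ^ 2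 * x ^ 2 + (-4 : ℝ) * ρ * α ^ 2 * z * x + (-6 : ℝ) * ρ ^ 2 * x ^ 2 + 12 * ρ ^ 2 * z * x + (-6 : ℝ) * ρ ^ 2 * z ^ 2 + (-6 : ℝ) * ρ ^ 2 * α * x ^ 2 + 8 * ρ ^ 2 * α * z * x + (-2 : ℝ) * ρ ^ 2 * α * z ^ 2 + 2 * ρ ^ 3 * x ^ 2 + (-4 : ℝ) * ρ ^ 3 * z * x + 2 * ρ ^ 3 * z ^ 2 + 4 * σ * ρ * α * x + (-4 : ℝ) * σ * ρ * α * z + 8 * σ * ρ * α ^ 2 * x + (-4 : ℝ) * σ * ρ * α ^ 2 * z + 4 * σ * ρ * α ^ 3 * x + (-8 : ℝ) * σ * ρ ^ 2 * α * x + 8 * σ * ρ ^ 2 * α * z + (-8 : ℝ) * σ * ρ ^ 2 * α ^ 2 * x + 4 * σ * ρ ^ 2 * α ^ 2 * z + 4 * σ * ρ ^ 3 * α * x + (-4 : ℝ) * σ * ρ ^ 3 * α * z + (-2 : ℝ) * σ ^ 2 * ρ ^ 2 * α ^ 2 + (-2 : ℝ) * σ ^ 2 * ρ ^ 2 * α ^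 3 + 2 * σ ^ 2 * ρ ^ 3 * α ^ 2) / (4 * α * (ρ - 1) * (ρ - 1 - α) ^ 2) := by
          field_simp
          ring
        linarith [e, div_nonneg hN hDB.le]
      · push_neg at h1 h2
        have hN : (0:ℝ) ≤ (-2 : ℝ) * x ^ 2 + 4 * z * x + (-2 : ℝ) * z ^ 2 + (-4 : ℝ) * α * x ^ 2 + 8 * α * z * x + (-2 : ℝ) * α * z ^ 2 + (-2 : ℝ) * α ^ 2 * x ^ 2 + 4 * α ^ 2 * z * x + 6 * ρ * x ^ 2 + (-12 : ℝ) * ρ * z * x + 6 * ρ * z ^ 2 + 8 * ρ * α * x ^ 2 + (-16 : ℝ) * ρ * α * z * x + 4 * ρ * α * z ^ 2 + 2 * ρ * α ^ 2 * x ^ 2 + (-4 : ℝ) * ρ * α ^ 2 * z * x + (-6 : ℝ) * ρ ^ 2 * x ^ 2 + 12 * ρ ^ 2 * z * x + (-6 : ℝ) * ρ ^ 2 * z ^ 2 + (-4 : ℝ) * ρ ^ 2 * α * x ^ 2 + 8 * ρ ^ 2 * α * z * x + (-2 : ℝ) * ρ ^ 2 * α * z ^ 2 + 2 * ρ ^ 3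 * x ^ 2 + (-4 : ℝ) * ρ ^ 3 * z * x + 2 * ρ ^ 3 * z ^ 2 + (-4 : ℝ) * σ * ρ * α * z + (-4 : ℝ) * σ * ρ * α ^ 2 * z + 8 * σ * ρ ^ 2 * α * z + 4 * σ * ρ ^ 2 * α ^ 2 * z + (-4 : ℝ) * σ * ρ ^ 3 * α * z + 2 * σ ^ 2 * ρ ^ 2 * α + 2 * σ ^ 2 * ρ ^ 2 * α ^ 2 + (-4 : ℝ) * σ ^ 2 * ρ ^ 3 * α + (-2 : ℝ) * σ ^ 2 * ρ ^ 3 * α ^ 2 + 2 * σ ^ 2 * ρ ^ 4 * α := by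
          nlinarith [
            mul_nonneg hd.le (sq_nonneg ((ρ - 1) * (ρ * σ - z))),
            mul_nonneg (mul_nonneg (mul_pos hd hd).le (mul_nonneg hr1.le (show (0:ℝ) ≤ x - ρ * σ by linarith))) (show (0:ℝ) ≤ x + ρ * σ - 2 * z by linarith)]
        have e : (σ ^ 2 * (ρ + 1) / 2 + 1 / (2 * α) * (x - z) ^ 2) - ((-(((ρ - 1) * z - ρ * σ * α) / (ρ - 1 - α)) ^ 2 + 2 * ρ * σ * (((ρ - 1) * z - ρ * σ * α) / (ρ - 1 - α)) - σ ^ 2) / (2 * (ρ - 1)) + 1 / (2 * α) * (((ρ - 1) * z - ρ * σ * α) / (ρ - 1 - α) - z) ^ 2) = ((-2 : ℝ) * x ^ 2 + 4 * z * x + (-2 : ℝ) * z ^ 2 + (-4 : ℝ) * α * x ^ 2 + 8 * α * z * x + (-2 : ℝ) * α * z ^ 2 + (-2 : ℝ) * α ^ 2 * x ^ 2 + 4 * α ^ 2 * z * x + 6 * ρ * x ^ 2 + (-12 : ℝ) * ρ * z * x + 6 * ρ * z ^ 2 + 8 * ρ * α * x ^ 2 + (-16 : ℝ) * ρ * α *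 z * x + 4 * ρ * α * z ^ 2 + 2 * ρ * α ^ 2 * x ^ 2 + (-4 : ℝ) * ρ * α ^ 2 * z * x + (-6 : ℝ) * ρ ^ 2 * x ^ 2 + 12 * ρ ^ 2 * z * x + (-6 : ℝ) * ρ ^ 2 * z ^ 2 + (-4 : ℝ) * ρ ^ 2 * α * x ^ 2 + 8 * ρ ^ 2 * α * z * x + (-2 : ℝ) * ρ ^ 2 * α * z ^ 2 + 2 * ρ ^ 3 * x ^ 2 + (-4 : ℝ) * ρ ^ 3 * z * x + 2 * ρ ^ 3 * z ^ 2 + (-4 : ℝ) * σ * ρ * α * z + (-4 : ℝ) * σ * ρ * α ^ 2 * z + 8 * σ * ρ ^ 2 * α * z + 4 * σ * ρ ^ 2 * α ^ 2 * z + (-4 : ℝ) * σ * ρ ^ 3 * α * z + 2 * σ ^ 2 * ρ ^ 2 * α + 2 * σ ^ 2 * ρ ^ 2 * α ^ 2 + (-4 : ℝ) * σ ^ 2 * ρ ^ 3 * α + (-2 : ℝ) * σ ^ 2 * ρ ^ 3 * α ^ 2 + 2 * σ ^ 2 * ρ ^ 4 * α) / (4 * α * (ρ - 1) * (ρ - 1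 - α) ^ 2) := by
          field_simp
          ring
        linarith [e, div_nonneg hN hDB.le]
    · -- p = z
      push_neg at hB
      rw [if_neg (not_le.mpr hB)]
      have hscadp : scad σ ρ z = σ ^ 2 * (ρ + 1) / 2 := by
        rw [scad, hzz, if_neg, if_neg] <;> push_neg <;> [linarith; nlinarith]
      rw [hscadp, scad, hxx]
      split_ifs with h1 h2
      ·
        have hN : (0:ℝ) ≤ (-2 : ℝ) * x ^ 2 + 4 * z * x + (-2 : ℝ) * z ^ 2 + 2 * ρ * x ^ 2 + (-4 : ℝ) * ρ * z * x + 2 * ρ * z ^ 2 + (-4 : ℝ) * σ * α * x + 4 * σ * ρ * α * x + 2 * σ ^ 2 * α + (-2 : ℝ) * σ ^ 2 * ρ ^ 2 * α := by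
          nlinarith [
            mul_nonneg hr1.le (sq_nonneg (z - ρ * σ)),
            mul_nonneg (mul_nonneg hr1.le (show (0:ℝ) ≤ z - ρ * σ by linarith)) (show (0:ℝ) ≤ ρ * σ - x by nlinarith),
            mul_nonneg (mul_nonneg hr1.le (show (0:ℝ) ≤ σ - x by linarith)) (show (0:ℝ) ≤ 2 * ρ * σ - x - σ - 2 * α * σ by nlinarith),
            mul_nonneg (mul_nonneg (mul_nonneg hr1.le hr1.le) (mul_nonneg hσ.le hσ.le)) hd.le]
        have e : (σ * x + 1 / (2 * α) * (x - z) ^ 2) - (σ ^ 2 * (ρ + 1) / 2 + 1 / (2 * α) * (z - z) ^ 2) = ((-2 : ℝ) * x ^ 2 + 4 * z * x + (-2 : ℝ) * z ^ 2 + 2 * ρ * x ^ 2 + (-4 : ℝ) * ρ * z * x + 2 * ρ * z ^ 2 + (-4 : ℝ) * σ * α * x + 4 * σ * ρ * α * x + 2 * σ ^ 2 * α + (-2 : ℝ) * σ ^ 2 * ρ ^ 2 * α) / (4 * α * (ρ - 1)) := by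
          field_simp
          ring
        linarith [e, div_nonneg hN hDA.le]
      · push_neg at h1
        have hN : (0:ℝ) ≤ (-2 : ℝ) * x ^ 2 + 4 * z * x + (-2 : ℝ) * z ^ 2 + (-2 : ℝ) * α * x ^ 2 + 2 * ρ * x ^ 2 + (-4 : ℝ) * ρ * z * x + 2 * ρ * z ^ 2 + 4 * σ * ρ * α * x + (-2 : ℝ) * σ ^ 2 * ρ ^ 2 * α := by
          nlinarith [
            mul_nonneg (mul_nonneg hr1.le (show (0:ℝ) ≤ z - ρ * σ by linarith)) (show (0:ℝ) ≤ ρ * σ - x by linarith),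
            mul_nonneg hd.le (sq_nonneg (x - ρ * σ)),
            mul_nonneg hr1.le (sq_nonneg (z - ρ * σ))]
        have e : ((-x ^ 2 + 2 * ρ * σ * x - σ ^ 2) / (2 * (ρ - 1)) + 1 / (2 * α) * (x - z) ^ 2) - (σ ^ 2 * (ρ + 1) / 2 + 1 / (2 * α) * (z - z) ^ 2) = ((-2 : ℝ) * x ^ 2 + 4 * z * x + (-2 : ℝ) * z ^ 2 + (-2 : ℝ) * α * x ^ 2 + 2 * ρ * x ^ 2 + (-4 : ℝ) * ρ * z * x + 2 * ρ * z ^ 2 + 4 * σ * ρ * α * x + (-2 : ℝ) * σ ^ 2 * ρ ^ 2 * α) / (4 * α * (ρ - 1)) := by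
          field_simp
          ring
        linarith [e, div_nonneg hN hDA.le]
      · push_neg at h1 h2
        have hN : (0:ℝ) ≤ (-2 : ℝ) * x ^ 2 + 4 * z * x + (-2 : ℝ) * z ^ 2 + 2 * ρ * x ^ 2 + (-4 : ℝ) * ρ * z * x + 2 * ρ * z ^ 2 := by
          nlinarith [
            mul_nonneg hr1.le (sq_nonneg (x - z))]
        have e : (σ ^ 2 * (ρ + 1) / 2 + 1 / (2 * α) * (x - z) ^ 2) - (σ ^ 2 * (ρ + 1) / 2 + 1 / (2 * α) * (z - z) ^ 2) = ((-2 : ℝ) * x ^ 2 + 4 * z * x + (-2 : ℝ) * z ^ 2 + 2 * ρ * x ^ 2 + (-4 : ℝ) * ρ * z * x + 2 * ρ * z ^ 2) / (4 * α * (ρ - 1)) := by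
          field_simp
          ring
        linarith [e, div_nonneg hN hDA.le]

lemma scad_key2 (σ ρ α : ℝ) (hσ : 0 < σ) (hα : 0 < α) (hρ : 1 + α < ρ) (z : ℝ) (hz : 0 ≤ z)
    (x : ℝ) :
    scad σ ρ (scadProx σ ρ α z) + (1 / (2 * α)) * (scadProx σ ρ α z - z) ^ 2 ≤
      scad σ ρ x + (1 / (2 * α)) * (x - z) ^ 2 := by
  rcases le_total 0 x with hx | hx
  · exact scad_key σ ρ α hσ hα hρ z hz x hx
  · have h := scad_key σ ρ α hσ hα hρ z hz (-x) (by linarith)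
    have hb : (0:ℝ) ≤ 1 / (2 * α) := by positivity
    refine h.trans ?_
    rw [scad_neg']
    have h2 : (-x - z) ^ 2 ≤ (x - z) ^ 2 := by nlinarith [mul_nonneg (neg_nonneg.mpr hx) hz]
    nlinarith [mul_le_mul_of_nonneg_left h2 hb]

/-- The SCAD proximal operator has the stated closed form: for `σ > 0`, `α > 0`,
`ρ > 1 + α` and every `z ∈ ℝ`, `scadProx σ ρ α z` is a global minimizer over `ℝ`
of `x ↦ scad σ ρ x + (1/(2α)) * (x - z)^2`. -/
theorem scadProx_solves_scad_prox (σ ρ α : ℝ) (hσ : 0 < σ) (hα : 0 < α)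
    (hρ : 1 + α < ρ) (z : ℝ) :
    ∀ x : ℝ,
      scad σ ρ (scadProx σ ρ α z) + (1 / (2 * α)) * (scadProx σ ρ α z - z) ^ 2 ≤
        scad σ ρ x + (1 / (2 * α)) * (x - z) ^ 2 := by
  
  intro x
  rcases le_total 0 z with hz | hz
  · exact scad_key2 σ ρ α hσ hα hρ z hz x
  · have h := scad_key2 σ ρ α hσ hα hρ (-z) (by linarith) (-x)
    rw [scadProx_neg'] at h
    have e2 : scad σ ρ (-scadProx σ ρ α z) = scad σ ρ (scadProx σ ρ α z) := scad_neg' σ ρ _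
    have e3 : (-scadProx σ ρ α z - -z) ^ 2 = (scadProx σ ρ α z - z) ^ 2 := by ring
    have e4 : (-x - -z) ^ 2 = (x - z) ^ 2 := by ring
    have e5 : scad σ ρ (-x) = scad σ ρ x := scad_neg' σ ρ x
    rw [e2, e3, e4, e5] at h
    exact h
end

section
/- The SCAD proximal operator over the nonnegative half-line agrees with the unconstrained SCAD proximal operator on nonnegative inputs and is zero on negative inputs: let σ > 0, α > 0 and ρ > 1 + α, let r be the SCAD penalty with parameters σ and ρ, and define P(z) = max(z − σα, 0) for 0 ≤ z ≤ σ(1 + α), P(z) = ((ρ − 1)z − ρσα)/(ρ − 1 − α) for σ(1 + α) < z ≤ ρσ, and P(z) = z for z > ρσ. Then for every z ∈ ℝ, a global minimizer over {x ∈ ℝ : x ≥ 0} of x ↦ r(x) + (1/(2α))(x − z)² is P(z) if z ≥ 0, and 0 if z < 0. -/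
/-- The (nonnegative-branch) SCAD proximal map `P`:
`P(z) = max (z − σα) 0` for `z ≤ σ(1+α)`, `P(z) = ((ρ−1)z − ρσα)/(ρ−1−α)` for
`σ(1+α) < z ≤ ρσ`, and `P(z) = z` for `z > ρσ`. -/
noncomputable def scadProxPos (σ ρ α z : ℝ) : ℝ :=
  if z ≤ σ * (1 + α) then max (z - σ * α) 0
  else if z ≤ ρ * σ then ((ρ - 1) * z - ρ * σ * α) / (ρ - 1 - α)
  else z

noncomputable def scadMid (σ ρ x : ℝ) : ℝ :=
  (-x ^ 2 + 2 * ρ * σ * x - σ ^ 2) / (2 * (ρ - 1))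

section ScadPieces

variable {σ ρ x : ℝ}

theorem scadMid_eq_mul_sub (hρ : ρ ≠ 1) :
    scadMid σ ρ x = σ * x - (x - σ) ^ 2 / (2 * (ρ - 1)) := by
  have : ρ - 1 ≠ 0 := sub_ne_zero.mpr hρ
  unfold scadMid
  field_simp
  ring

theorem scadMid_eq_const_sub (hρ : ρ ≠ 1) :
    scadMid σ ρ x = σ ^ 2 * (ρ + 1) / 2 - (x - ρ * σ) ^ 2 / (2 * (ρ - 1)) := by
  have : ρ - 1 ≠ 0 := sub_ne_zero.mpr hρ
  unfold scadMid
  field_simp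
  ring

theorem scad_eq_mul (hx : 0 ≤ x) (hxσ : x ≤ σ) : scad σ ρ x = σ * x := by
  rw [scad, abs_of_nonneg hx, if_pos hxσ]

theorem scad_eq_scadMid (hσ : 0 < σ) (hρ : 1 < ρ) (hσx : σ ≤ x) (hxρ : x ≤ ρ * σ) :
    scad σ ρ x = scadMid σ ρ x := by
  rcases hσx.lt_or_eq with hσx | rfl
  · rw [scad, abs_of_pos (hσ.trans hσx), if_neg hσx.not_ge, if_pos hxρ, scadMid]
  · rw [scadMid_eq_mul_sub hρ.ne', scad_eq_mul hσ.le le_rfl]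
    ring

theorem scad_eq_const (hσ : 0 < σ) (hρ : 1 < ρ) (hx : ρ * σ ≤ x) :
    scad σ ρ x = σ ^ 2 * (ρ + 1) / 2 := by
  have hσρ : σ < ρ * σ := lt_mul_left hσ hρ
  rcases hx.lt_or_eq with hx | rfl
  · rw [scad, abs_of_pos (hσ.trans (hσρ.trans hx)), if_neg (hσρ.trans hx).not_ge,
      if_neg hx.not_ge]
  · rw [scad_eq_scadMid hσ hρ hσρ.le le_rfl, scadMid_eq_const_sub hρ.ne']
    ring

theorem scadMid_le_scad (hσ : 0 < σ) (hρ : 1 < ρ) (hx : 0 ≤ x) : scadMid σ ρ x ≤ scad σ ρ x := by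
  have hsq : ∀ y : ℝ, 0 ≤ y ^ 2 / (2 * (ρ - 1)) := fun y => by
    have : 0 < ρ - 1 := sub_pos.mpr hρ
    positivity
  rcases le_total x σ with hxσ | hσx
  · rw [scad_eq_mul hx hxσ, scadMid_eq_mul_sub hρ.ne']
    linarith [hsq (x - σ)]
  rcases le_total x (ρ * σ) with hxρ | hρx
  · exact (scad_eq_scadMid hσ hρ hσx hxρ).ge
  · rw [scad_eq_const hσ hρ hρx, scadMid_eq_const_sub hρ.ne']
    linarith [hsq (x - ρ * σ)]

end ScadPieces

section QuadraticMinorants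

variable {σ ρ p x : ℝ}

theorem scad_add_mul_sub_sub_sq_le_of_le (hσ : 0 < σ) (hρ : 1 < ρ) (hp : 0 ≤ p) (hpσ : p ≤ σ)
    (hx : 0 ≤ x) : scad σ ρ p + σ * (x - p) - (x - p) ^ 2 / (2 * (ρ - 1)) ≤ scad σ ρ x := by
  have hρ1 : 0 < 2 * (ρ - 1) := by linarith
  rw [scad_eq_mul hp hpσ]
  rcases le_total x σ with hxσ | hσx
  · rw [scad_eq_mul hx hxσ]
    linarith [div_nonneg (sq_nonneg (x - p)) hρ1.le]
  · have hsq : (x - σ) ^ 2 ≤ (x - p) ^ 2 := pow_le_pow_left₀ (by linarith) (by linarith) 2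
    calc σ * p + σ * (x - p) - (x - p) ^ 2 / (2 * (ρ - 1))
        ≤ σ * x - (x - σ) ^ 2 / (2 * (ρ - 1)) := by
          linarith [div_le_div_of_nonneg_right hsq hρ1.le]
      _ = scadMid σ ρ x := (scadMid_eq_mul_sub hρ.ne').symm
      _ ≤ scad σ ρ x := scadMid_le_scad hσ hρ hx

theorem scad_add_mul_sub_sub_sq_le_of_mem_Icc (hσ : 0 < σ) (hρ : 1 < ρ) (hσp : σ ≤ p)
    (hpρ : p ≤ ρ * σ) (hx : 0 ≤ x) :
    scad σ ρ p + (ρ * σ - p) / (ρ - 1) * (x - p) - (x - p) ^ 2 / (2 * (ρ - 1)) ≤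
      scad σ ρ x := by
  have hρ1 : ρ - 1 ≠ 0 := sub_ne_zero.mpr hρ.ne'
  calc scad σ ρ p + (ρ * σ - p) / (ρ - 1) * (x - p) - (x - p) ^ 2 / (2 * (ρ - 1))
      = scadMid σ ρ x := by
        rw [scad_eq_scadMid hσ hρ hσp hpρ, scadMid, scadMid]
        field_simp
        ring
    _ ≤ scad σ ρ x := scadMid_le_scad hσ hρ hx

theorem scad_sub_sq_le_of_le (hσ : 0 < σ) (hρ : 1 < ρ) (hp : ρ * σ ≤ p) (hx : 0 ≤ x) :
    scad σ ρ p - (x - p) ^ 2 / (2 * (ρ - 1)) ≤ scad σ ρ x := by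
  have hρ1 : 0 < 2 * (ρ - 1) := by linarith
  rw [scad_eq_const hσ hρ hp]
  rcases le_total (ρ * σ) x with hρx | hxρ
  · rw [scad_eq_const hσ hρ hρx]
    linarith [div_nonneg (sq_nonneg (x - p)) hρ1.le]
  · have hsq : (x - ρ * σ) ^ 2 ≤ (x - p) ^ 2 := by
      rw [← neg_sub, neg_sq, ← neg_sub p, neg_sq]
      exact pow_le_pow_left₀ (by linarith) (by linarith) 2
    calc σ ^ 2 * (ρ + 1) / 2 - (x - p) ^ 2 / (2 * (ρ - 1))
        ≤ σ ^ 2 * (ρ + 1) / 2 - (x - ρ * σ) ^ 2 / (2 * (ρ - 1)) := by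
          linarith [div_le_div_of_nonneg_right hsq hρ1.le]
      _ = scadMid σ ρ x := (scadMid_eq_const_sub hρ.ne').symm
      _ ≤ scad σ ρ x := scadMid_le_scad hσ hρ hx

end QuadraticMinorants

theorem prox_objective_le_of_quadratic_minorant {f : ℝ → ℝ} {p g z α κ x : ℝ} (hα : 0 < α)
    (hακ : α ≤ κ) (hminor : f p + g * (x - p) - (x - p) ^ 2 / (2 * κ) ≤ f x)
    (hvar : 0 ≤ (g + (p - z) / α) * (x - p)) :
    f p + 1 / (2 * α) * (p - z) ^ 2 ≤ f x + 1 / (2 * α) * (x - z) ^ 2 := by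
  have hcurv : 1 / (2 * κ) ≤ 1 / (2 * α) := one_div_le_one_div_of_le (by positivity) (by linarith)
  have hexpand : 1 / (2 * α) * (x - z) ^ 2 = 1 / (2 * α) * (p - z) ^ 2 +
      (p - z) / α * (x - p) + 1 / (2 * α) * (x - p) ^ 2 := by
    field_simp
    ring
  have hdiv : (x - p) ^ 2 / (2 * κ) = 1 / (2 * κ) * (x - p) ^ 2 := by ring
  nlinarith [mul_le_mul_of_nonneg_right hcurv (sq_nonneg (x - p))]

section Prox

variable {σ ρ α z : ℝ}

theorem scadProxPos_of_neg (hσ : 0 ≤ σ) (hα : 0 ≤ α) (hz : z < 0) : scadProxPos σ ρ α z = 0 := by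
  have hzσ : z ≤ σ * (1 + α) := hz.le.trans (by positivity)
  rw [scadProxPos, if_pos hzσ, max_eq_right (by nlinarith)]

theorem scadProxPos_isMinOn (hσ : 0 < σ) (hα : 0 < α) (hρ : 1 + α < ρ) :
    IsMinOn (fun x => scad σ ρ x + 1 / (2 * α) * (x - z) ^ 2) (Set.Ici 0)
      (scadProxPos σ ρ α z) := by
  refine isMinOn_iff.mpr fun x (hx : 0 ≤ x) => ?_
  have hρ1 : 1 < ρ := by linarith
  have hακ : α ≤ ρ - 1 := by linarith
  unfold scadProxPos
  split_ifs with hz₁ hz₂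
  · set p := max (z - σ * α) 0
    refine prox_objective_le_of_quadratic_minorant (g := σ) hα hακ
      (scad_add_mul_sub_sub_sq_le_of_le hσ hρ1 (le_max_right _ _)
        (max_le (by linarith) hσ.le) hx) ?_
    rcases le_total z (σ * α) with hzσ | hσz
    · have hp : p = 0 := max_eq_right (by linarith)
      have hslope : 0 ≤ σ + (0 - z) / α := by
        rw [zero_sub, neg_div, ← sub_eq_add_neg, sub_nonneg, div_le_iff₀ hα]
        linarith
      rw [hp, sub_zero]
      exact mul_nonneg hslope hx
    · have hp : p = z - σ * α := max_eq_left (by linarith)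
      rw [hp, show σ + (z - σ * α - z) / α = 0 by field_simp; ring, zero_mul]
  · set p := ((ρ - 1) * z - ρ * σ * α) / (ρ - 1 - α)
    have hβ : 0 < ρ - 1 - α := by linarith
    have hp : (ρ - 1 - α) * p = (ρ - 1) * z - ρ * σ * α := by
      simp only [p]
      field_simp
    clear_value p
    have hσp : σ ≤ p := le_of_mul_le_mul_left (by nlinarith) hβ
    have hpρ : p ≤ ρ * σ := le_of_mul_le_mul_left (by nlinarith) hβ
    have hslope : (ρ * σ - p) / (ρ - 1) + (p - z) / α = 0 := by
      have : ρ - 1 ≠ 0 := sub_ne_zero.mpr hρ1.ne'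
      field_simp
      linear_combination hp
    exact prox_objective_le_of_quadratic_minorant hα hακ
      (scad_add_mul_sub_sub_sq_le_of_mem_Icc hσ hρ1 hσp hpρ hx) (by rw [hslope, zero_mul])
  · have hzρ : ρ * σ ≤ z := by linarith
    exact prox_objective_le_of_quadratic_minorant (g := 0) hα hακ
      (by simpa using scad_sub_sq_le_of_le hσ hρ1 hzρ hx) (by simp)

end Prox

/-- The SCAD proximal operator over the nonnegative half-line agrees with the
unconstrained SCAD proximal operator on nonnegative inputs and is zero on negative
inputs: for `σ > 0`, `α > 0`, `ρ > 1 + α` and every `z ∈ ℝ`, the point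
`if 0 ≤ z then P z else 0` is a global minimizer over `{x : 0 ≤ x}` of
`x ↦ scad σ ρ x + (1/(2α)) * (x - z)^2`. -/
theorem scad_nonneg_prox_closed_form (σ ρ α : ℝ) (hσ : 0 < σ) (hα : 0 < α)
    (hρ : 1 + α < ρ) (z : ℝ) :
    ∀ x : ℝ, 0 ≤ x →
      scad σ ρ (if 0 ≤ z then scadProxPos σ ρ α z else 0) +
          (1 / (2 * α)) * ((if 0 ≤ z then scadProxPos σ ρ α z else 0) - z) ^ 2 ≤
        scad σ ρ x + (1 / (2 * α)) * (x - z) ^ 2 := by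
  intro x hx
  have hcandidate : (if 0 ≤ z then scadProxPos σ ρ α z else 0) = scadProxPos σ ρ α z :=
    ite_eq_left_iff.mpr fun hz => (scadProxPos_of_neg hσ.le hα.le (not_le.mp hz)).symm
  rw [hcandidate]
  exact isMinOn_iff.mp (scadProxPos_isMinOn hσ hα hρ) x hx
end

section
/- The ℓ0-ball proximal problem restricted to the nonnegative orthant is solved by keeping the k largest positive coordinates: let z ∈ ℝⁿ, let k be a natural number, and let S ⊆ {1, …, n} be an index set such that |S| ≤ k, z_i > 0 for every i ∈ S, max(z_j, 0) ≤ z_i for every i ∈ S and j ∉ S, and moreover S contains every index j with z_j > 0 whenever |S| < k. Define x* ∈ ℝⁿ by x*_i = z_i for i ∈ S and x*_i = 0 for i ∉ S. Then x* is a global minimizer of ‖x − z‖² over the set {x ∈ ℝⁿ : x_i ≥ 0 for all i, and x has at most k nonzero coordinates}. -/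
open Finset

/-- The ℓ0-ball proximal problem restricted to the nonnegative orthant is solved by
keeping the `k` largest positive coordinates: let `z ∈ ℝⁿ`, `k ∈ ℕ`, and let
`S ⊆ {1,…,n}` with `|S| ≤ k`, `z i > 0` for every `i ∈ S`,
`max (z j) 0 ≤ z i` for every `i ∈ S` and `j ∉ S`, and such that `S` contains every
index `j` with `z j > 0` whenever `|S| < k`.  Then the vector keeping the coordinates
of `z` on `S` and zero elsewhere is a global minimizer of `‖x − z‖²` over
`{x : x ≥ 0 componentwise and x has at most k nonzero coordinates}`. -/
theorem hard_thresholding_solves_nonneg_l0_prox {n : ℕ} (z : Fin n → ℝ) (k : ℕ)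
    (S : Finset (Fin n)) (hcard : S.card ≤ k)
    (hpos : ∀ i ∈ S, 0 < z i)
    (hS : ∀ i ∈ S, ∀ j ∉ S, max (z j) 0 ≤ z i)
    (hfull : S.card < k → ∀ j, 0 < z j → j ∈ S) :
    ∀ x : Fin n → ℝ, (∀ i, 0 ≤ x i) →
      (Finset.univ.filter fun i => x i ≠ 0).card ≤ k →
        ∑ i, ((if i ∈ S then z i else 0) - z i) ^ 2 ≤ ∑ i, (x i - z i) ^ 2 := by
  intro x hx hxk
  set T : Finset (Fin n) := Finset.univ.filter fun i => x i ≠ 0 ∧ 0 < z i with hT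
  have hTk : T.card ≤ k := le_trans (Finset.card_le_card (by
    intro i hi
    simp only [hT, Finset.mem_filter] at hi ⊢
    exact ⟨hi.1, hi.2.1⟩)) hxk
  -- LHS equals ∑ i, if i ∈ S then 0 else z i ^ 2
  have hLHS : ∑ i, ((if i ∈ S then z i else 0) - z i) ^ 2
      = ∑ i, (if i ∈ S then 0 else z i ^ 2) := by
    apply Finset.sum_congr rfl
    intro i _
    by_cases h : i ∈ S <;> simp [h] <;> ring
  -- RHS ≥ ∑ i, if i ∈ T then 0 else z i ^ 2
  have hRHS : ∑ i, (if i ∈ T then 0 else z i ^ 2) ≤ ∑ i, (x i - z i) ^ 2 := by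
    apply Finset.sum_le_sum
    intro i _
    by_cases h : i ∈ T
    · simp [h]; positivity
    · simp only [h, if_neg, if_false]
      simp only [hT, Finset.mem_filter, Finset.mem_univ, true_and, not_and_or, not_not,
        not_lt] at h
      rcases h with h | h
      · rw [h]; ring_nf; rfl
      · have : -z i ≤ x i - z i := by linarith [hx i]
        have h2 : 0 ≤ -z i := by linarith
        nlinarith
  rw [hLHS]
  refine le_trans ?_ hRHS
  -- reduce to ∑_{T} z^2 ≤ ∑_{S} z^2
  have key : ∑ i ∈ T, z i ^ 2 ≤ ∑ i ∈ S, z i ^ 2 := by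
    rw [← Finset.sum_inter_add_sum_sdiff T S (fun i => z i ^ 2),
      ← Finset.sum_inter_add_sum_sdiff S T (fun i => z i ^ 2), Finset.inter_comm S T]
    gcongr _ + ?_
    -- ∑_{T\S} ≤ ∑_{S\T}
    rcases lt_or_eq_of_le hcard with hlt | heq
    · have : T \ S = ∅ := by
        rw [Finset.sdiff_eq_empty_iff_subset]
        intro i hi
        simp only [hT, Finset.mem_filter] at hi
        exact hfull hlt i hi.2.2
      rw [this, Finset.sum_empty]
      apply Finset.sum_nonneg; intro i _; positivity
    · have hcards : (T \ S).card ≤ (S \ T).card := by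
        have h1 := Finset.card_sdiff_add_card_inter T S
        have h2 := Finset.card_sdiff_add_card_inter S T
        rw [Finset.inter_comm S T] at h2
        omega
      rcases Finset.eq_empty_or_nonempty (S \ T) with he | hne
      · have : (T \ S).card = 0 := by rw [he] at hcards; simpa using hcards
        rw [Finset.card_eq_zero] at this
        simp [he, this]
      · obtain ⟨m, hmS, hmin⟩ := Finset.exists_min_image (S \ T) (fun i => z i ^ 2) hne
        have hmSm : m ∈ S := (Finset.mem_sdiff.mp hmS).1
        calc ∑ i ∈ T \ S, z i ^ 2 ≤ (T \ S).card • (z m ^ 2) := by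
              apply Finset.sum_le_card_nsmul
              intro j hj
              have hjT := Finset.mem_sdiff.mp hj
              have hjpos : 0 < z j := by
                have := hjT.1; simp only [hT, Finset.mem_filter] at this; exact this.2.2
              have := hS m hmSm j hjT.2
              have hzj : z j ≤ z m := le_trans (le_max_left _ _) this
              nlinarith
          _ ≤ (S \ T).card • (z m ^ 2) := by
              apply nsmul_le_nsmul_left _ hcards
              positivity
          _ ≤ ∑ i ∈ S \ T, z i ^ 2 := Finset.card_nsmul_le_sum _ _ _ hmin
  have aux : ∀ U : Finset (Fin n), ∑ i, (if i ∈ U then 0 else z i ^ 2)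
      = ∑ i, z i ^ 2 - ∑ i ∈ U, z i ^ 2 := by
    intro U
    have h1 : ∀ i, (if i ∈ U then 0 else z i ^ 2) = z i ^ 2 - (if i ∈ U then z i ^ 2 else 0) := by
      intro i; split <;> simp
    simp_rw [h1]
    rw [Finset.sum_sub_distrib, Finset.sum_ite_mem, Finset.univ_inter]
  rw [aux S, aux T]
  linarith
end

section
/- The partial derivative of the quadratic-form term of the marginal log-likelihood with respect to a random-effect variance is minus the squared weighted correlation: let Z be a real n × q matrix with columns z₁, …, z_q, let Λ be a symmetric positive definite n × n real matrix, let ξ ∈ ℝⁿ, and define Ω(γ) = Z·Diag(γ)·Zᵀ + Λ for γ ∈ ℝ^q. Fix j ∈ {1, …, q} and γ ∈ ℝ^q at which Ω(γ) is invertible. Then the function t ↦ ξᵀ Ω(γ + (t − γ_j)e_j)^{-1} ξ, where e_j is the j-th standard basis vector, is differentiable at t = γ_j with derivative −(z_jᵀ Ω(γ)^{-1} ξ)². -/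
/-!
Moving along the `j`-th coordinate changes `Ω` by a rank-one term: `Ω(γ + s eⱼ) = Ω(γ) + s zⱼzⱼᵀ`.
Differentiating the inverse gives `-Ω⁻¹ zⱼzⱼᵀ Ω⁻¹`, and since `Ω` is symmetric the quadratic form
`ξᵀ Ω⁻¹ zⱼ zⱼᵀ Ω⁻¹ ξ` is the square of `zⱼᵀ Ω⁻¹ ξ`.
-/

open Matrix

-- Matrices carry no global norm; on a finite-dimensional space every norm gives the same derivative.
attribute [local instance] Matrix.linftyOpNormedRing Matrix.linftyOpNormedAlgebra

theorem HasDerivAt.ringInverse {𝕜 R : Type*} [NontriviallyNormedField 𝕜] [NormedRing R]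
    [HasSummableGeomSeries R] [NormedAlgebra 𝕜 R] {f : 𝕜 → R} {f' : R} {x : 𝕜}
    (hf : HasDerivAt f f' x) (hx : IsUnit (f x)) :
    HasDerivAt (fun t => Ring.inverse (f t))
      (-(Ring.inverse (f x) * f' * Ring.inverse (f x))) x := by
  obtain ⟨u, hu⟩ := hx
  have := (hu ▸ hasFDerivAt_ringInverse (𝕜 := 𝕜) u).comp_hasDerivAt x hf
  simpa [← hu, Function.comp_def, ContinuousLinearMap.mulLeftRight_apply] using this

section MatrixCalculus

variable {𝕜 : Type*} [RCLike 𝕜] {m : Type*} [Fintype m] [DecidableEq m]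

theorem HasDerivAt.matrix_inv {F : 𝕜 → Matrix m m 𝕜} {F' : Matrix m m 𝕜} {x : 𝕜}
    (hF : HasDerivAt F F' x) (hx : IsUnit (F x).det) :
    HasDerivAt (fun t => (F t)⁻¹) (-((F x)⁻¹ * F' * (F x)⁻¹)) x := by
  simp only [nonsing_inv_eq_ringInverse]
  exact hF.ringInverse ((isUnit_iff_isUnit_det _).mpr hx)

theorem HasDerivAt.dotProduct_mulVec (v w : m → 𝕜) {F : 𝕜 → Matrix m m 𝕜}
    {F' : Matrix m m 𝕜} {x : 𝕜} (hF : HasDerivAt F F' x) :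
    HasDerivAt (fun t => v ⬝ᵥ (F t *ᵥ w)) (v ⬝ᵥ (F' *ᵥ w)) x := by
  let form : Matrix m m 𝕜 →ₗ[𝕜] 𝕜 :=
    { toFun := fun N => v ⬝ᵥ (N *ᵥ w)
      map_add' := fun M N => by simp [add_mulVec, dotProduct_add]
      map_smul' := fun c N => by simp [smul_mulVec, dotProduct_smul] }
  exact form.toContinuousLinearMap.hasFDerivAt.comp_hasDerivAt x hF

end MatrixCalculus

namespace Matrix

variable {R : Type*} [CommRing R]

theorem mul_diagonal_single_mul {l m n : Type*} [Fintype m] [DecidableEq m]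
    (A : Matrix l m R) (B : Matrix m n R) (j : m) :
    A * diagonal (Pi.single j (1 : R)) * B = vecMulVec (Aᵀ j) (B j) := by
  ext i k
  simp [mul_apply, diagonal_apply, Pi.single_apply, vecMulVec_apply]

theorem IsSymm.dotProduct_mul_vecMulVec_mul_mulVec {n : Type*} [Fintype n] {B : Matrix n n R}
    (hB : B.IsSymm) (v z : n → R) :
    v ⬝ᵥ ((B * vecMulVec z z * B) *ᵥ v) = (z ⬝ᵥ (B *ᵥ v)) ^ 2 := by
  have hswap : v ⬝ᵥ (B *ᵥ z) = z ⬝ᵥ (B *ᵥ v) := by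
    rw [dotProduct_mulVec, dotProduct_comm, ← mulVec_transpose, hB.eq]
  rw [mul_vecMulVec, vecMulVec_mul, vecMulVec_mulVec, ← dotProduct_mulVec, op_smul_eq_smul,
    dotProduct_smul, hswap, smul_eq_mul, sq]

end Matrix

/-- The partial derivative of the quadratic-form term of the marginal log-likelihood
with respect to a random-effect variance is minus the squared weighted correlation:
with `Ω(γ) = Z·Diag(γ)·Zᵀ + Λ` invertible at `γ`, the function
`t ↦ ξᵀ Ω(γ + (t − γⱼ)eⱼ)⁻¹ ξ` is differentiable at `t = γⱼ` with derivative
`−(zⱼᵀ Ω(γ)⁻¹ ξ)²`, where `zⱼ` is the `j`-th column of `Z`. -/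
theorem deriv_quadratic_form_wrt_variance {n q : ℕ}
    (Z : Matrix (Fin n) (Fin q) ℝ)
    (Λ : Matrix (Fin n) (Fin n) ℝ) (hΛ : Λ.PosDef)
    (ξ : Fin n → ℝ) (j : Fin q) (γ : Fin q → ℝ)
    (hinv : IsUnit (Z * Matrix.diagonal γ * Zᵀ + Λ).det) :
    HasDerivAt
      (fun t : ℝ =>
        ξ ⬝ᵥ ((Z * Matrix.diagonal (γ + (t - γ j) • (Pi.single j 1 : Fin q → ℝ)) * Zᵀ + Λ)⁻¹ *ᵥ ξ))
      (-(Zᵀ j ⬝ᵥ ((Z * Matrix.diagonal γ * Zᵀ + Λ)⁻¹ *ᵥ ξ)) ^ 2)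
      (γ j) := by
  set Ω := Z * diagonal γ * Zᵀ + Λ
  set z := Zᵀ j
  have hcurve (t : ℝ) :
      Z * diagonal (γ + (t - γ j) • Pi.single j 1) * Zᵀ + Λ = Ω + (t - γ j) • vecMulVec z z := by
    rw [Pi.add_def, ← diagonal_add, diagonal_smul, Matrix.mul_add, Matrix.add_mul,
      Matrix.mul_smul, Matrix.smul_mul, mul_diagonal_single_mul, add_right_comm]
  have hline : HasDerivAt (fun t : ℝ => Ω + (t - γ j) • vecMulVec z z) (vecMulVec z z) (γ j) := by
    have h := (((hasDerivAt_id (γ j)).sub_const (γ j)).smul_const (vecMulVec z z)).const_add Ω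
    simp only [one_smul, id] at h
    exact h
  have hΩ : Ω.IsSymm := by
    rw [← isHermitian_iff_isSymm]
    simpa using (isHermitian_mul_mul_conjTranspose Z (isHermitian_diagonal γ)).add hΛ.isHermitian
  simp_rw [hcurve]
  refine ((hline.matrix_inv (by simpa using hinv)).dotProduct_mulVec ξ ξ).congr_deriv ?_
  rw [sub_self, zero_smul, add_zero, neg_mulVec, dotProduct_neg,
    hΩ.inv.dotProduct_mul_vecMulVec_mul_mulVec]
end

section
/- Gradient of the marginal negative log-likelihood with respect to the random-effect variances: for i = 1, …, m let Z_i be a real n_i × q matrix, Λ_i a symmetric positive definite n_i × n_i real matrix, and ξ_i ∈ ℝ^{n_i}, and define Ω_i(γ) = Z_i·Diag(γ)·Z_iᵀ + Λ_i and L(γ) = Σ_{i=1}^m [(1/2) ξ_iᵀ Ω_i(γ)^{-1} ξ_i + (1/2) log det Ω_i(γ)]. At any γ ∈ ℝ^q where every Ω_i(γ) is positive definite, the partial derivative of L with respect to γ_j equals (1/2) Σ_{i=1}^m [ (z_i^j)ᵀ Ω_i(γ)^{-1} z_i^j − ((z_i^j)ᵀ Ω_i(γ)^{-1} ξ_i)²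 ], where z_i^j denotes the j-th column of Z_i. -/
/-!
Moving `γⱼ` to `γⱼ + s` changes each `Ωᵢ` by the rank-one matrix `s • zᵢʲ zᵢʲᵀ`. The matrix
determinant lemma and the Sherman–Morrison formula then put each group's term in closed form:
with `w = zᵀΩ⁻¹z`, `p = zᵀΩ⁻¹ξ` and `r = ξᵀΩ⁻¹ξ` it equals
`(1/2) (r - s p² / (1 + s w)) + (1/2) log (det Ω · (1 + s w))` near `s = 0`,
whose derivative at `s = 0` is `(1/2) (w - p²)`.
-/

open Matrix

section RankOneUpdate

variable {N : Type*} [Fintype N] [DecidableEq N]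

theorem det_add_smul_vecMulVec {R : Type*} [CommRing R] {A : Matrix N N R} (hA : IsUnit A.det)
    (u v : N → R) (s : R) :
    (A + s • vecMulVec u v).det = A.det * (1 + s * (v ⬝ᵥ A⁻¹ *ᵥ u)) := by
  rw [← smul_vecMulVec, vecMulVec_eq Unit, det_add_replicateCol_mul_replicateRow hA,
    Matrix.mul_assoc, ← replicateCol_mulVec, det_unique (1 + _ : Matrix Unit Unit R)]
  simp [replicateRow_mul_replicateCol_apply, mulVec_smul]

variable {K : Type*} [Field K] {A : Matrix N N K}

theorem inv_add_smul_vecMulVec (hA : IsUnit A.det) (u v : N → K) (s : K)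
    (h : 1 + s * (v ⬝ᵥ A⁻¹ *ᵥ u) ≠ 0) :
    (A + s • vecMulVec u v)⁻¹ =
      A⁻¹ - (s / (1 + s * (v ⬝ᵥ A⁻¹ *ᵥ u))) • vecMulVec (A⁻¹ *ᵥ u) (v ᵥ* A⁻¹) := by
  have hk : s / (1 + s * (v ⬝ᵥ A⁻¹ *ᵥ u)) * (1 + s * (v ⬝ᵥ A⁻¹ *ᵥ u)) = s :=
    div_mul_cancel₀ s h
  generalize s / (1 + s * (v ⬝ᵥ A⁻¹ *ᵥ u)) = k at hk ⊢
  apply inv_eq_right_inv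
  rw [Matrix.add_mul, Matrix.mul_sub, Matrix.mul_sub, mul_nonsing_inv A hA, Matrix.mul_smul,
    mul_vecMulVec, mulVec_mulVec, mul_nonsing_inv A hA, one_mulVec, Matrix.smul_mul,
    Matrix.smul_mul, vecMulVec_mul, Matrix.mul_smul, vecMulVec_mul_vecMulVec, vecMulVec_smul]
  linear_combination (norm := module) -hk • vecMulVec u (v ᵥ* A⁻¹)

theorem dotProduct_inv_add_smul_vecMulVec_self_mulVec (hA : IsUnit A.det) (hAs : A.IsSymm)
    (v x : N → K) (s : K) (h : 1 + s * (v ⬝ᵥ A⁻¹ *ᵥ v) ≠ 0) :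
    x ⬝ᵥ (A + s • vecMulVec v v)⁻¹ *ᵥ x =
      x ⬝ᵥ A⁻¹ *ᵥ x - s * (v ⬝ᵥ A⁻¹ *ᵥ x) ^ 2 / (1 + s * (v ⬝ᵥ A⁻¹ *ᵥ v)) := by
  have hsymm : x ⬝ᵥ A⁻¹ *ᵥ v = v ⬝ᵥ A⁻¹ *ᵥ x := by
    rw [dotProduct_mulVec, ← mulVec_transpose, hAs.inv.eq, dotProduct_comm]
  rw [inv_add_smul_vecMulVec hA v v s h, sub_mulVec, smul_mulVec, vecMulVec_mulVec,
    dotProduct_sub, dotProduct_smul, dotProduct_smul, ← dotProduct_mulVec, hsymm]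
  simp only [MulOpposite.smul_eq_mul_unop, MulOpposite.unop_op, smul_eq_mul]
  ring

end RankOneUpdate

theorem mul_diagonal_update_mul_transpose {N J R : Type*} [Fintype J] [DecidableEq J]
    [CommRing R] (Z : Matrix N J R) (γ : J → R) (j : J) (t : R) :
    Z * diagonal (Function.update γ j t) * Zᵀ =
      Z * diagonal γ * Zᵀ + (t - γ j) • vecMulVec (Zᵀ j) (Zᵀ j) := by
  have hupdate : ∀ k, Function.update γ j t k = γ k + if k = j then t - γ j else 0 := by
    intro k
    by_cases hk : k = j
    · subst hk; simp
    · simp [hk]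
  ext a b
  rw [Matrix.add_apply, mul_apply, mul_apply]
  simp only [mul_diagonal, transpose_apply, hupdate, Matrix.smul_apply, vecMulVec_apply,
    smul_eq_mul, mul_add, add_mul, Finset.sum_add_distrib, mul_ite, ite_mul, mul_zero, zero_mul,
    Finset.sum_ite_eq', Finset.mem_univ, if_true]
  ring

/-- Minus the log-density of the centred Gaussian with covariance `Ω` at `ξ`, without the
constant `(n / 2) log 2π`. -/
noncomputable def gaussianNegLogLik {N : Type*} [Fintype N] [DecidableEq N]
    (Ω : Matrix N N ℝ) (ξ : N → ℝ) : ℝ :=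
  1 / 2 * (ξ ⬝ᵥ Ω⁻¹ *ᵥ ξ) + 1 / 2 * Real.log Ω.det

section

variable {N : Type*} [Fintype N] [DecidableEq N] {A : Matrix N N ℝ}

theorem gaussianNegLogLik_add_smul_vecMulVec_self (hA : A.det ≠ 0) (hAs : A.IsSymm)
    (v ξ : N → ℝ) {s : ℝ} (h : 1 + s * (v ⬝ᵥ A⁻¹ *ᵥ v) ≠ 0) :
    gaussianNegLogLik (A + s • vecMulVec v v) ξ =
      1 / 2 * (ξ ⬝ᵥ A⁻¹ *ᵥ ξ - s * (v ⬝ᵥ A⁻¹ *ᵥ ξ) ^ 2 / (1 + s * (v ⬝ᵥ A⁻¹ *ᵥ v))) +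
        1 / 2 * Real.log (A.det * (1 + s * (v ⬝ᵥ A⁻¹ *ᵥ v))) := by
  rw [gaussianNegLogLik, dotProduct_inv_add_smul_vecMulVec_self_mulVec hA.isUnit hAs v ξ s h,
    det_add_smul_vecMulVec hA.isUnit]

theorem hasDerivAt_gaussianNegLogLik_add_smul_vecMulVec_self (hA : A.det ≠ 0) (hAs : A.IsSymm)
    (v ξ : N → ℝ) :
    HasDerivAt (fun s : ℝ => gaussianNegLogLik (A + s • vecMulVec v v) ξ)
      (1 / 2 * (v ⬝ᵥ A⁻¹ *ᵥ v - (v ⬝ᵥ A⁻¹ *ᵥ ξ) ^ 2)) 0 := by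
  set w := v ⬝ᵥ A⁻¹ *ᵥ v
  set p := v ⬝ᵥ A⁻¹ *ᵥ ξ
  have hden : HasDerivAt (fun s : ℝ => 1 + s * w) w 0 := by
    simpa using ((hasDerivAt_id (0 : ℝ)).mul_const w).const_add 1
  have hquot : HasDerivAt (fun s : ℝ => s * p ^ 2 / (1 + s * w)) (p ^ 2) 0 := by
    simpa using ((hasDerivAt_id (0 : ℝ)).mul_const (p ^ 2)).fun_div hden (by simp)
  have hlog : HasDerivAt (fun s : ℝ => Real.log (A.det * (1 + s * w))) w 0 := by
    simpa [hA] using (hden.const_mul A.det).log (by simpa using hA)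
  have hden_ne : ∀ᶠ s in nhds (0 : ℝ), 1 + s * w ≠ 0 :=
    hden.continuousAt.eventually_ne (by simp)
  have hclosed := ((hquot.const_sub (ξ ⬝ᵥ A⁻¹ *ᵥ ξ)).const_mul (1 / 2 : ℝ)).add
    (hlog.const_mul (1 / 2 : ℝ))
  refine (hclosed.congr_deriv (by ring)).congr_of_eventuallyEq ?_
  filter_upwards [hden_ne] with s hs
  exact gaussianNegLogLik_add_smul_vecMulVec_self hA hAs v ξ hs

end

theorem gradient_marginal_nll_wrt_variances_general {m q : ℕ} (n : Fin m → ℕ)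
    (Z : ∀ i, Matrix (Fin (n i)) (Fin q) ℝ)
    (Λ : ∀ i, Matrix (Fin (n i)) (Fin (n i)) ℝ)
    (ξ : ∀ i, Fin (n i) → ℝ)
    (γ : Fin q → ℝ) (j : Fin q)
    (hpos : ∀ i, (Z i * Matrix.diagonal γ * (Z i)ᵀ + Λ i).PosDef) :
    HasDerivAt
      (fun t : ℝ => ∑ i,
        ((1 / 2 : ℝ) *
            (ξ i ⬝ᵥ ((Z i * Matrix.diagonal (Function.update γ j t) * (Z i)ᵀ + Λ i)⁻¹ *ᵥ ξ i)) +
          (1 / 2 : ℝ) *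
            Real.log (Z i * Matrix.diagonal (Function.update γ j t) * (Z i)ᵀ + Λ i).det))
      ((1 / 2 : ℝ) * ∑ i,
        ((Z i)ᵀ j ⬝ᵥ ((Z i * Matrix.diagonal γ * (Z i)ᵀ + Λ i)⁻¹ *ᵥ (Z i)ᵀ j) -
          ((Z i)ᵀ j ⬝ᵥ ((Z i * Matrix.diagonal γ * (Z i)ᵀ + Λ i)⁻¹ *ᵥ ξ i)) ^ 2))
      (γ j) := by
  have hΩ : ∀ i t, Z i * diagonal (Function.update γ j t) * (Z i)ᵀ + Λ i =
      (Z i * diagonal γ * (Z i)ᵀ + Λ i) + (t - γ j) • vecMulVec ((Z i)ᵀ j) ((Z i)ᵀ j) := by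
    intro i t
    rw [mul_diagonal_update_mul_transpose, add_right_comm]
  have hgroup : ∀ i ∈ Finset.univ, HasDerivAt
      (fun t => gaussianNegLogLik (Z i * diagonal (Function.update γ j t) * (Z i)ᵀ + Λ i) (ξ i))
      (1 / 2 * ((Z i)ᵀ j ⬝ᵥ (Z i * diagonal γ * (Z i)ᵀ + Λ i)⁻¹ *ᵥ (Z i)ᵀ j -
        ((Z i)ᵀ j ⬝ᵥ (Z i * diagonal γ * (Z i)ᵀ + Λ i)⁻¹ *ᵥ ξ i) ^ 2)) (γ j) := by
    intro i _
    have h := hasDerivAt_gaussianNegLogLik_add_smul_vecMulVec_self (hpos i).det_pos.ne'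
      (isHermitian_iff_isSymm.mp (hpos i).isHermitian) ((Z i)ᵀ j) (ξ i)
    rw [← sub_self (γ j)] at h
    simpa only [hΩ] using h.comp_sub_const (γ j) (γ j)
  rw [Finset.mul_sum]
  exact HasDerivAt.fun_sum hgroup

/-- Gradient of the marginal negative log-likelihood with respect to the random-effect
variances: with `Ωᵢ(γ) = Zᵢ·Diag(γ)·Zᵢᵀ + Λᵢ` positive definite at `γ` for every group
`i`, the partial derivative with respect to `γⱼ` of
`L(γ) = ∑ i, (1/2) ξᵢᵀ Ωᵢ(γ)⁻¹ ξᵢ + (1/2) log det Ωᵢ(γ)` equals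
`(1/2) ∑ i, (zᵢʲᵀ Ωᵢ(γ)⁻¹ zᵢʲ − (zᵢʲᵀ Ωᵢ(γ)⁻¹ ξᵢ)²)`, where `zᵢʲ` is the `j`-th column
of `Zᵢ`. -/
theorem gradient_marginal_nll_wrt_variances {m q : ℕ} (n : Fin m → ℕ)
    (Z : ∀ i, Matrix (Fin (n i)) (Fin q) ℝ)
    (Λ : ∀ i, Matrix (Fin (n i)) (Fin (n i)) ℝ)
    (hΛ : ∀ i, (Λ i).PosDef)
    (ξ : ∀ i, Fin (n i) → ℝ)
    (γ : Fin q → ℝ) (j : Fin q)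
    (hpos : ∀ i, (Z i * Matrix.diagonal γ * (Z i)ᵀ + Λ i).PosDef) :
    HasDerivAt
      (fun t : ℝ => ∑ i,
        ((1 / 2 : ℝ) *
            (ξ i ⬝ᵥ ((Z i * Matrix.diagonal (Function.update γ j t) * (Z i)ᵀ + Λ i)⁻¹ *ᵥ ξ i)) +
          (1 / 2 : ℝ) *
            Real.log (Z i * Matrix.diagonal (Function.update γ j t) * (Z i)ᵀ + Λ i).det))
      ((1 / 2 : ℝ) * ∑ i,
        ((Z i)ᵀ j ⬝ᵥ ((Z i * Matrix.diagonal γ * (Z i)ᵀ + Λ i)⁻¹ *ᵥ (Z i)ᵀ j) -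
          ((Z i)ᵀ j ⬝ᵥ ((Z i * Matrix.diagonal γ * (Z i)ᵀ + Λ i)⁻¹ *ᵥ ξ i)) ^ 2))
      (γ j) :=
  gradient_marginal_nll_wrt_variances_general n Z Λ ξ γ j hpos
end
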